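/- arXiv:math/0509126 — 6 statements merged into one kernel-verified Lean document; each statement's English description precedes it below -/
import Mathlib

section
/- Let a, b ∈ ℕ^n with a_1+⋯+a_n = b_1+⋯+b_n = d. Then a ≥_Bor b (i.e., there exist α_1,…,α_{n-1} ∈ ℕ with a - b = Σ_{j=1}^{n-1} α_j(e_j - e_{j+1})) if and only if there exists an upper triangular matrix M ∈ ℕ^{n×n} (M_{ij} = 0 for j < i) whose j-th column sums to b_j for all j and whose i-th row sums to a_i for all i. -/
open MvPolynomial

namespace Fumasoli

/-- The `i`-th standard basis exponent vector `e_i`. -/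
def stdExp (ν : ℕ) (i : Fin ν) : Fin ν → ℕ := fun k => if k = i then 1 else 0

/-- The Borel order: `a ≥_Bor b` iff `a - b` is a nonnegative integer combination of the
vectors `e_j - e_{j+1}` for `1 ≤ j < ν`.  Here `α` records the coefficients, with
`α 0 = 0` and `α j = 0` for `j ≥ ν`, and component `i` (0-indexed) of `a - b` equals
`α (i+1) - α i`. -/
def BorelGE {ν : ℕ} (a b : Fin ν → ℕ) : Prop :=
  ∃ α : ℕ → ℕ, α 0 = 0 ∧ (∀ j, ν ≤ j → α j = 0) ∧
    ∀ i : Fin ν, (a i : ℤ) - (b i : ℤ) = (α (i.val + 1) : ℤ) - (α i.val : ℤ)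

/-- `M` is an upper triangular matrix of nonnegative integers with row sums `a` and
column sums `b`, i.e. `M ∈ U(a,b)`. -/
def IsTransferMatrix {ν : ℕ} (M : Matrix (Fin ν) (Fin ν) ℕ) (a b : Fin ν → ℕ) : Prop :=
  (∀ i j : Fin ν, (j : ℕ) < (i : ℕ) → M i j = 0) ∧
  (∀ j, ∑ i, M i j = b j) ∧ (∀ i, ∑ j, M i j = a i)

/-- Integer-matrix version of `IsTransferMatrix`, with integer row and column sums. -/
def IsTransferMatrixZ {ν : ℕ} (M : Matrix (Fin ν) (Fin ν) ℤ) (a b : Fin ν → ℤ) : Prop :=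
  (∀ i j : Fin ν, (j : ℕ) < (i : ℕ) → M i j = 0) ∧ (∀ i j : Fin ν, 0 ≤ M i j) ∧
  (∀ j, ∑ i, M i j = b j) ∧ (∀ i, ∑ j, M i j = a i)

/-- `m(ρ)`: the largest (1-indexed) position where `ρ` is nonzero, or `1` if `ρ = 0`. -/
def mIdx {ν : ℕ} (ρ : Fin ν → ℤ) : ℕ :=
  max 1 ((Finset.univ.filter fun i => ρ i ≠ 0).sup fun i => (i : ℕ) + 1)

/-- `ρ_{m(ρ)} > 0`, expressed via the (1-indexed) position `m(ρ)`. -/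
def mPos {ν : ℕ} (ρ : Fin ν → ℤ) : Prop :=
  ∃ i : Fin ν, (i : ℕ) + 1 = mIdx ρ ∧ 0 < ρ i

/-- A term order on exponent vectors: a translation-invariant strict linear order. -/
structure TermOrder (ν : ℕ) where
  lt : (Fin ν → ℕ) → (Fin ν → ℕ) → Prop
  irrefl : ∀ a, ¬ lt a a
  trans : ∀ a b c, lt a b → lt b c → lt a c
  total : ∀ a b, lt a b ∨ a = b ∨ lt b a
  add_right : ∀ a b c, lt a b → lt (a + c) (b + c)

/-- Admissibility of a term order: `X_1 > X_2 > ⋯ > X_ν` and it refines total degree. -/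
def TermOrder.IsAdmissible {ν : ℕ} (τ : TermOrder ν) : Prop :=
  (∀ i j : Fin ν, i < j → τ.lt (stdExp ν j) (stdExp ν i)) ∧
  (∀ a b : Fin ν → ℕ, (∑ i, a i) < (∑ i, b i) → τ.lt a b)

/-- The (degree) reverse lexicographic order: `a < b` iff `deg a < deg b`, or the degrees
agree and the last position where `a` and `b` differ has `a` strictly bigger there. -/
def rlexLT {ν : ℕ} (a b : Fin ν → ℕ) : Prop :=
  (∑ i, a i) < (∑ i, b i) ∨
  ((∑ i, a i) = (∑ i, b i) ∧ ∃ k : Fin ν, b k < a k ∧ ∀ j : Fin ν, k < j → a j = b j)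

/-- Exponent vector as a finitely supported function. -/
noncomputable def expF {ν : ℕ} (a : Fin ν → ℕ) : Fin ν →₀ ℕ := Finsupp.equivFunOnFinite.symm a

/-- The monomial `X^a`. -/
noncomputable def mono (K : Type*) [CommSemiring K] {ν : ℕ} (a : Fin ν → ℕ) :
    MvPolynomial (Fin ν) K := monomial (expF a) 1

/-- `m` is the leading monomial (w.r.t. the strict order `lt`) of `f`. -/
def IsLeadOf {K : Type*} [CommSemiring K] {ν : ℕ}
    (lt : (Fin ν → ℕ) → (Fin ν → ℕ) → Prop)
    (f : MvPolynomial (Fin ν) K) (m : Fin ν →₀ ℕ) : Prop :=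
  m ∈ f.support ∧ ∀ m' ∈ f.support, m' ≠ m → lt (⇑m') (⇑m)

/-- The initial ideal of `I` w.r.t. the strict order `lt`: generated by the leading
monomials of the nonzero elements of `I`. -/
noncomputable def initialIdeal {K : Type*} [CommSemiring K] {ν : ℕ}
    (lt : (Fin ν → ℕ) → (Fin ν → ℕ) → Prop)
    (I : Ideal (MvPolynomial (Fin ν) K)) : Ideal (MvPolynomial (Fin ν) K) :=
  Ideal.span {p | ∃ f ∈ I, f ≠ 0 ∧ ∃ m, IsLeadOf lt f m ∧ p = monomial m (1 : K)}

/-- `G` is a Gröbner basis of `I` w.r.t. `lt`: the elements of `G` lie in `I` and their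
leading monomials generate the initial ideal of `I`. -/
noncomputable def IsGroebnerBasis {K : Type*} [CommSemiring K] {ν : ℕ}
    (lt : (Fin ν → ℕ) → (Fin ν → ℕ) → Prop)
    (G : Set (MvPolynomial (Fin ν) K)) (I : Ideal (MvPolynomial (Fin ν) K)) : Prop :=
  (∀ g ∈ G, g ∈ I) ∧
    initialIdeal lt I =
      Ideal.span {p | ∃ g ∈ G, g ≠ 0 ∧ ∃ m, IsLeadOf lt g m ∧ p = monomial m (1 : K)}

/-- The irrelevant maximal ideal `(X_1, …, X_ν)`. -/
noncomputable def irrelIdeal (K : Type*) [CommSemiring K] (ν : ℕ) :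
    Ideal (MvPolynomial (Fin ν) K) := Ideal.span (Set.range X)

/-- Saturation of `I` with respect to the irrelevant maximal ideal. -/
noncomputable def satIdeal {K : Type*} [CommRing K] {ν : ℕ}
    (I : Ideal (MvPolynomial (Fin ν) K)) : Ideal (MvPolynomial (Fin ν) K) :=
  ⨆ k : ℕ, Submodule.colon I ((irrelIdeal K ν ^ k : Ideal (MvPolynomial (Fin ν) K)) : Set (MvPolynomial (Fin ν) K))

/-- Saturation (colon) of `I` with respect to powers of the variable `X_v`. -/
noncomputable def satVar {K : Type*} [CommRing K] {ν : ℕ}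
    (I : Ideal (MvPolynomial (Fin ν) K)) (v : Fin ν) : Ideal (MvPolynomial (Fin ν) K) :=
  ⨆ k : ℕ, Submodule.colon I (Ideal.span {(X v : MvPolynomial (Fin ν) K) ^ k})

/-- The linear change of coordinates by the matrix `g`: `X_j ↦ Σ_i g_{ij} X_i`. -/
noncomputable def actMat (K : Type*) [CommRing K] {ν : ℕ}
    (g : Matrix (Fin ν) (Fin ν) K) :
    MvPolynomial (Fin ν) K →ₐ[K] MvPolynomial (Fin ν) K :=
  aeval fun j => ∑ i, C (g i j) * X i

/-- `g` is unipotent upper triangular. -/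
def IsUnipotent {K : Type*} [CommRing K] {ν : ℕ} (g : Matrix (Fin ν) (Fin ν) K) : Prop :=
  (∀ i j : Fin ν, j < i → g i j = 0) ∧ ∀ i, g i i = 1

/-- `J` is the generic initial ideal of `I` w.r.t. the order `lt`: there is a nonzero
polynomial `h` in the matrix entries such that `in(g(I)) = J` for every invertible `g`
with `h(g) ≠ 0` (a dense Zariski-open set of coordinate changes). -/
noncomputable def IsGin {K : Type*} [CommRing K] {ν : ℕ}
    (lt : (Fin ν → ℕ) → (Fin ν → ℕ) → Prop)
    (I J : Ideal (MvPolynomial (Fin ν) K)) : Prop :=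
  ∃ h : MvPolynomial (Fin ν × Fin ν) K, h ≠ 0 ∧
    ∀ g : Matrix (Fin ν) (Fin ν) K, IsUnit g.det →
      MvPolynomial.eval (fun p => g p.1 p.2) h ≠ 0 →
      initialIdeal lt (Ideal.map (actMat K g) I) = J

/-- `I` is a homogeneous ideal. -/
def IsHomog {K : Type*} [CommSemiring K] {ν : ℕ}
    (I : Ideal (MvPolynomial (Fin ν) K)) : Prop :=
  ∀ f ∈ I, ∀ d : ℕ, homogeneousComponent d f ∈ I

/-- `c + ρ`, as a vector of natural numbers. -/
def shiftVec {ν : ℕ} (ρ : Fin ν → ℤ) (c : Fin ν → ℕ) : Fin ν → ℕ :=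
  fun i => ((c i : ℤ) + ρ i).toNat

/-- The set `C + ρ`. -/
def shiftSet {ν : ℕ} (C : Set (Fin ν → ℕ)) (ρ : Fin ν → ℤ) : Set (Fin ν → ℕ) :=
  {x | ∃ c ∈ C, ∀ i, (x i : ℤ) = (c i : ℤ) + ρ i}

/-- A Borel set: upwards closed under the Borel order. -/
def IsBorelSet {ν : ℕ} (B : Set (Fin ν → ℕ)) : Prop :=
  ∀ a b : Fin ν → ℕ, BorelGE a b → b ∈ B → a ∈ B

/-- `(A, C, ρ)` is a binomial system of degree `d` in `ν` indeterminates. -/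
def IsBinomialSystem {ν : ℕ} (d : ℕ) (A C : Set (Fin ν → ℕ)) (ρ : Fin ν → ℤ) : Prop :=
  (∀ a ∈ A, ∑ i, a i = d) ∧ (∀ c ∈ C, ∑ i, c i = d) ∧
  (∀ c ∈ C, ∀ i, 0 ≤ (c i : ℤ) + ρ i) ∧ (∀ c ∈ C, (∑ i, ((c i : ℤ) + ρ i)) = (d : ℤ)) ∧
  A ∩ C = ∅ ∧ A ∩ shiftSet C ρ = ∅ ∧ C ∩ shiftSet C ρ = ∅ ∧
  IsBorelSet (A ∪ C) ∧ IsBorelSet (A ∪ shiftSet C ρ)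

/-- The ideal `F(A,C,ρ)`, generated by the monomials `X^a` (`a ∈ A`) and the binomials
`X^c - X^{c+ρ}` (`c ∈ C`). -/
noncomputable def Fideal (K : Type*) [CommRing K] {ν : ℕ}
    (A C : Set (Fin ν → ℕ)) (ρ : Fin ν → ℤ) : Ideal (MvPolynomial (Fin ν) K) :=
  Ideal.span ((fun a => mono K a) '' A ∪ (fun c => mono K c - mono K (shiftVec ρ c)) '' C)

/-- Restriction `A_i` of a set of exponent vectors to the first `i` indeterminates:
`A_i = {x : x extended by zeros lies in A}`. -/
def restrSet {ν : ℕ} (i : ℕ) (A : Set (Fin ν → ℕ)) : Set (Fin i → ℕ) :=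
  {x | (fun j : Fin ν => if hj : (j : ℕ) < i then x ⟨j, hj⟩ else 0) ∈ A}

/-- The inclusion `K[X_1,…,X_i] → K[X_1,…,X_ν]`. -/
noncomputable def inclAlg (K : Type*) [CommSemiring K] {i ν : ℕ} (h : i ≤ ν) :
    MvPolynomial (Fin i) K →ₐ[K] MvPolynomial (Fin ν) K :=
  rename (Fin.castLE h)

/-- Dimension of a module: Krull dimension of `R` modulo the annihilator. -/
noncomputable def moduleDim (R M : Type*) [CommRing R] [AddCommGroup M] [Module R M] :
    WithBot (WithTop ℕ) :=
  ringKrullDim (R ⧸ Module.annihilator R M)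

/-- `M` is a Cohen-Macaulay module of dimension `t` (relative to the ideal `I`):
its dimension is `t` and there is a regular sequence on `M` of length `t` inside `I`. -/
def IsCMofDim {R : Type*} [CommRing R] (I : Ideal R) (M : Type*)
    [AddCommGroup M] [Module R M] (t : ℕ) : Prop :=
  moduleDim R M = (t : WithBot (WithTop ℕ)) ∧
    ∃ rs : List R, rs.length = t ∧ (∀ r ∈ rs, r ∈ I) ∧ RingTheory.Sequence.IsRegular M rs

/-- The quotient module `J / J'` of an ideal by a subideal. -/
noncomputable def idealQuot {R : Type*} [CommRing R] (J J' : Ideal R) :=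
  J ⧸ (Submodule.comap (Submodule.subtype J) (J' : Submodule R R))

noncomputable instance idealQuotAddCommGroup {R : Type*} [CommRing R] (J J' : Ideal R) :
    AddCommGroup (idealQuot J J') := by unfold idealQuot; infer_instance

noncomputable instance idealQuotModule {R : Type*} [CommRing R] (J J' : Ideal R) :
    Module R (idealQuot J J') := by unfold idealQuot; infer_instance

/-- A homogeneous ideal `𝔞` is sequentially Cohen-Macaulay: there is a finite strictly
increasing filtration `𝔞 = J_0 ⊊ J_1 ⊊ ⋯ ⊊ J_r = S` by homogeneous ideals such that each
quotient `J_{i+1}/J_i` is Cohen-Macaulay and the dimensions strictly increase. -/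
noncomputable def IsSeqCM {K : Type*} [CommRing K] {ν : ℕ}
    (I : Ideal (MvPolynomial (Fin ν) K)) : Prop :=
  ∃ (r : ℕ) (J : Fin (r + 1) → Ideal (MvPolynomial (Fin ν) K)) (t : Fin r → ℕ),
    J 0 = I ∧ J (Fin.last r) = ⊤ ∧ (∀ i, IsHomog (J i)) ∧
    (∀ i : Fin r, J i.castSucc < J i.succ) ∧
    (∀ i : Fin r, IsCMofDim (irrelIdeal K ν) (idealQuot (J i.succ) (J i.castSucc)) (t i)) ∧
    StrictMono t


/-- `μ_M`: the product over the columns of `M` of the multinomial coefficients of the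
column entries. -/
def muM {ν : ℕ} (M : Matrix (Fin ν) (Fin ν) ℕ) : ℕ :=
  ∏ j, Nat.multinomial Finset.univ (fun i => M i j)

/-- `M + ρ`: add `ρ_j` to the `j`-th diagonal entry of `M` (as a matrix of naturals). -/
def addDiag {ν : ℕ} (M : Matrix (Fin ν) (Fin ν) ℕ) (ρ : Fin ν → ℤ) :
    Matrix (Fin ν) (Fin ν) ℕ :=
  fun i j => if i = j then ((M i j : ℤ) + ρ i).toNat else M i j

/-- `I` is a monomial ideal. -/
def IsMonomialIdeal {K : Type*} [CommSemiring K] {ν : ℕ}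
    (I : Ideal (MvPolynomial (Fin ν) K)) : Prop :=
  ∀ f ∈ I, ∀ m ∈ f.support, monomial m (1 : K) ∈ I

/-- Borel property of a monomial ideal: if `X^m ∈ I` and `X_j` divides `X^m`, then
`(X_i/X_j)·X^m ∈ I` for all `i ≤ j`. -/
def IsBorelIdeal {K : Type*} [CommSemiring K] {ν : ℕ}
    (I : Ideal (MvPolynomial (Fin ν) K)) : Prop :=
  ∀ m : Fin ν →₀ ℕ, monomial m (1 : K) ∈ I → ∀ i j : Fin ν, i ≤ j → m j ≠ 0 →
    monomial (m + Finsupp.single i 1 - Finsupp.single j 1) (1 : K) ∈ I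

/-! Both sides are equivalent to the dominance `B k ≤ A k` of the partial sums `A` of `a` and `B`
of `b`. In an upper triangular matrix the first `k` columns live in the first `k` rows, so
`B k ≤ A k`. Conversely, cutting `[0, d)` once into the blocks `[A i, A (i+1))` and once into the
blocks `[B j, B (j+1))` and recording the overlaps gives a matrix with row sums `a` and column sums
`b` (the northwest-corner rule); dominance is exactly what makes it upper triangular. -/

section PartialSum

variable {n : ℕ}

def partialSum (f : Fin n → ℕ) (k : ℕ) : ℕ :=
  ∑ i ∈ Finset.univ.filter (fun i : Fin n => (i : ℕ) < k), f i

@[simp]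
lemma partialSum_zero (f : Fin n → ℕ) : partialSum f 0 = 0 := by
  simp [partialSum]

lemma partialSum_succ (f : Fin n → ℕ) (i : Fin n) :
    partialSum f (i + 1) = partialSum f i + f i := by
  have hfilter : Finset.univ.filter (fun j : Fin n => (j : ℕ) < i + 1)
      = insert i (Finset.univ.filter fun j : Fin n => (j : ℕ) < i) := by
    ext j
    simp only [Finset.mem_filter, Finset.mem_univ, true_and, Finset.mem_insert, Fin.ext_iff]
    omega
  rw [partialSum, hfilter, Finset.sum_insert (by simp), add_comm, partialSum]

lemma partialSum_of_le (f : Fin n → ℕ) {k : ℕ} (hk : n ≤ k) : partialSum f k = ∑ i, f i := by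
  rw [partialSum, Finset.filter_true_of_mem fun i _ => by omega]

lemma partialSum_mono (f : Fin n → ℕ) : Monotone (partialSum f) := fun k l hkl =>
  Finset.sum_le_sum_of_subset fun i => by
    simp only [Finset.mem_filter, Finset.mem_univ, true_and]
    omega

end PartialSum

/-- The coefficient of `e_k - e_{k+1}` is `partialSum a k - partialSum b k`. -/
lemma borelGE_iff_partialSum_le {n : ℕ} {a b : Fin n → ℕ} (hab : ∑ i, a i = ∑ i, b i) :
    BorelGE a b ↔ ∀ k, partialSum b k ≤ partialSum a k := by
  have htop : ∀ k, n ≤ k → partialSum a k = partialSum b k := fun k hk => by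
    rw [partialSum_of_le a hk, partialSum_of_le b hk, hab]
  constructor
  · rintro ⟨α, hα0, hαtop, hα⟩
    have hα_eq : ∀ k, (α k : ℤ) = partialSum a k - partialSum b k := by
      intro k
      induction k with
      | zero => simp [hα0]
      | succ k ih =>
        rcases lt_or_ge k n with hk | hk
        · have hαk := hα ⟨k, hk⟩
          have hak := partialSum_succ a ⟨k, hk⟩
          have hbk := partialSum_succ b ⟨k, hk⟩
          simp only at hαk hak hbk
          omega
        · rw [hαtop _ (by omega), htop _ (by omega)]
          simp
    intro k
    have hαk := hα_eq k
    omega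
  · intro hle
    refine ⟨fun k => partialSum a k - partialSum b k, by simp, fun k hk => by simp [htop k hk],
      fun i => ?_⟩
    dsimp only
    have hle_i := hle i
    have hle_succ := hle (i + 1)
    have hai := partialSum_succ a i
    have hbi := partialSum_succ b i
    omega

lemma partialSum_le_of_isTransferMatrix {n : ℕ} {M : Matrix (Fin n) (Fin n) ℕ}
    {a b : Fin n → ℕ} (hM : IsTransferMatrix M a b) (k : ℕ) :
    partialSum b k ≤ partialSum a k := by
  obtain ⟨htri, hcol, hrow⟩ := hM
  set S : Finset (Fin n) := {i : Fin n | (i : ℕ) < k}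
  calc partialSum b k = ∑ j ∈ S, ∑ i, M i j := Finset.sum_congr rfl fun j _ => (hcol j).symm
    _ = ∑ j ∈ S, ∑ i ∈ S, M i j := by
      refine Finset.sum_congr rfl fun j hj => (Finset.sum_subset (Finset.subset_univ S) ?_).symm
      intro i _ hi
      simp only [S, Finset.mem_filter, Finset.mem_univ, true_and, not_lt] at hj hi
      exact htri i j (by omega)
    _ = ∑ i ∈ S, ∑ j ∈ S, M i j := Finset.sum_comm
    _ ≤ ∑ i ∈ S, ∑ j, M i j :=
      Finset.sum_le_sum fun i _ => Finset.sum_le_sum_of_subset (Finset.subset_univ S)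
    _ = partialSum a k := Finset.sum_congr rfl fun i _ => hrow i

/-- Telescoping with the clamp `t ↦ min y (max x t)`: the pieces `[u j, u (j+1))` of a monotone
subdivision covering `[x, y)` cut it into overlaps whose lengths add up to `y - x`. -/
lemma sum_min_sub_max_eq {x y n : ℕ} {u : ℕ → ℕ} (hu : Monotone u) (hxy : x ≤ y)
    (h0 : u 0 ≤ x) (hn : y ≤ u n) :
    ∑ j : Fin n, (min y (u (j + 1)) - max x (u j)) = y - x := by
  set c : ℕ → ℕ := fun j => min y (max x (u j))
  have hc : Monotone c := fun j l hjl => by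
    have := hu hjl
    simp only [c]
    omega
  calc ∑ j : Fin n, (min y (u (j + 1)) - max x (u j))
      = ∑ j ∈ Finset.range n, (min y (u (j + 1)) - max x (u j)) :=
        Fin.sum_univ_eq_sum_range (fun j => min y (u (j + 1)) - max x (u j)) n
    _ = ∑ j ∈ Finset.range n, (c (j + 1) - c j) := by
        refine Finset.sum_congr rfl fun j _ => ?_
        have := hu (Nat.le_succ j)
        simp only [c]
        omega
    _ = c n - c 0 := Finset.sum_range_tsub hc n
    _ = y - x := by simp only [c]; omega

/-- Entry `(i, j)` is the length of `[A i, A (i+1)) ∩ [B j, B (j+1))`. -/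
def northwestCorner {n : ℕ} (a b : Fin n → ℕ) : Matrix (Fin n) (Fin n) ℕ := fun i j =>
  min (partialSum a (i + 1)) (partialSum b (j + 1)) - max (partialSum a i) (partialSum b j)

lemma isTransferMatrix_northwestCorner {n : ℕ} {a b : Fin n → ℕ}
    (hab : ∑ i, a i = ∑ i, b i) (hle : ∀ k, partialSum b k ≤ partialSum a k) :
    IsTransferMatrix (northwestCorner a b) a b := by
  have hA := partialSum_mono a
  have hB := partialSum_mono b
  have htotal : partialSum a n = partialSum b n := by
    rw [partialSum_of_le a le_rfl, partialSum_of_le b le_rfl, hab]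
  refine ⟨fun i j hji => ?_, fun j => ?_, fun i => ?_⟩
  · have := hB (show (j : ℕ) + 1 ≤ i by omega)
    have := hle i
    simp only [northwestCorner]
    omega
  · have hsum := sum_min_sub_max_eq hA (hB (Nat.le_add_right j 1)) (by simp)
      ((hB j.isLt).trans_eq htotal.symm)
    have := partialSum_succ b j
    simp only [min_comm (partialSum b _), max_comm (partialSum b _)] at hsum
    simp only [northwestCorner]
    omega
  · have hsum := sum_min_sub_max_eq hB (hA (Nat.le_add_right i 1)) (by simp)
      ((hA i.isLt).trans_eq htotal)
    have := partialSum_succ a i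
    simp only [northwestCorner]
    omega

/-- `a ≥_Bor b` iff there is an upper triangular matrix of nonnegative
integers with row sums `a` and column sums `b`. -/
theorem stmt0 {n d : ℕ} (a b : Fin n → ℕ)
    (ha : ∑ i, a i = d) (hb : ∑ i, b i = d) :
    BorelGE a b ↔ ∃ M : Matrix (Fin n) (Fin n) ℕ, IsTransferMatrix M a b := by
  have hab : ∑ i, a i = ∑ i, b i := ha.trans hb.symm
  rw [borelGE_iff_partialSum_le hab]
  exact ⟨fun hle => ⟨northwestCorner a b, isTransferMatrix_northwestCorner hab hle⟩,
    fun ⟨_, hM⟩ => partialSum_le_of_isTransferMatrix hM⟩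

end Fumasoli
end

section
/- Let b, c ∈ ℕ^n_d and ρ ∈ ℤ^n with b + ρ, c + ρ ∈ ℕ^n_d and b_i = c_i for all 1 ≤ i < m(ρ), where m(ρ) = max{i : ρ_i ≠ 0} (or 1 if ρ = 0). Suppose b ≥_Bor c and let M be an upper triangular matrix of nonnegative integers whose column sums are c and whose row sums are b. Then M_{jj} = c_j for all 1 ≤ j ≤ m(ρ). -/
open MvPolynomial

namespace Fumasoli

theorem _root_.Finset.eq_zero_of_sum_eq_single {ι : Type*} {s : Finset ι} {f : ι → ℕ} {i k : ι}
    (hi : i ∈ s) (hk : k ∈ s) (hki : k ≠ i) (hsum : ∑ j ∈ s, f j = f i) : f k = 0 := by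
  classical
  have hrest : ∑ j ∈ s.erase i, f j = 0 := by
    have := Finset.add_sum_erase s f hi
    omega
  exact Finset.sum_eq_zero_iff.mp hrest k (Finset.mem_erase.mpr ⟨hki, hk⟩)

namespace IsTransferMatrix

variable {n : ℕ} {M : Matrix (Fin n) (Fin n) ℕ} {b c : Fin n → ℕ}

/-- Below the diagonal column `j` vanishes by triangularity; above it, row `i` has sum
`b i = M i i`, so its off-diagonal entries vanish. -/
theorem diag_eq_of_rows_above_diag (hM : IsTransferMatrix M b c) (j : Fin n)
    (hrows : ∀ i < j, M i i = b i) : M j j = c j := by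
  obtain ⟨htri, hcol, hrow⟩ := hM
  have hoff : ∀ i, i ≠ j → M i j = 0 := by
    intro i hij
    rcases lt_or_gt_of_ne hij with hlt | hgt
    · exact Finset.eq_zero_of_sum_eq_single (Finset.mem_univ i) (Finset.mem_univ j)
        hij.symm ((hrow i).trans (hrows i hlt).symm)
    · exact htri i j hgt
  rw [← hcol j, Finset.sum_eq_single_of_mem j (Finset.mem_univ j) fun i _ hij => hoff i hij]

theorem diag_eq_of_forall_lt_eq (hM : IsTransferMatrix M b c) (k : ℕ)
    (heq : ∀ i : Fin n, (i : ℕ) < k → b i = c i) :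
    ∀ j : Fin n, (j : ℕ) ≤ k → M j j = c j := by
  intro j
  induction j using WellFoundedLT.induction with
  | ind j ih =>
    intro hjk
    refine hM.diag_eq_of_rows_above_diag j fun i hij => ?_
    have hik : (i : ℕ) < k := lt_of_lt_of_le hij hjk
    rw [ih i hij hik.le, heq i hik]

end IsTransferMatrix

theorem stmt2_general {n : ℕ} (b c : Fin n → ℕ) (ρ : Fin n → ℤ)
    (heq : ∀ i : Fin n, (i : ℕ) + 1 < mIdx ρ → b i = c i)
    (M : Matrix (Fin n) (Fin n) ℕ) (hM : IsTransferMatrix M b c) :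
    ∀ j : Fin n, (j : ℕ) + 1 ≤ mIdx ρ → M j j = c j :=
  fun j hj => hM.diag_eq_of_forall_lt_eq (mIdx ρ - 1) (fun i hi => heq i (by omega)) j (by omega)

/-- if `b ≥_Bor c`, `b_i = c_i` for `i < m(ρ)`, and `M ∈ U(b,c)`, then
`M_{jj} = c_j` for all `j ≤ m(ρ)` (1-indexed). -/
theorem stmt2 {n d : ℕ} (b c : Fin n → ℕ) (ρ : Fin n → ℤ)
    (hb : ∑ i, b i = d) (hc : ∑ i, c i = d)
    (hbρ : ∀ i, 0 ≤ (b i : ℤ) + ρ i) (hbρd : (∑ i, ((b i : ℤ) + ρ i)) = (d : ℤ))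
    (hcρ : ∀ i, 0 ≤ (c i : ℤ) + ρ i) (hcρd : (∑ i, ((c i : ℤ) + ρ i)) = (d : ℤ))
    (heq : ∀ i : Fin n, (i : ℕ) + 1 < mIdx ρ → b i = c i)
    (hBor : BorelGE b c)
    (M : Matrix (Fin n) (Fin n) ℕ) (hM : IsTransferMatrix M b c) :
    ∀ j : Fin n, (j : ℕ) + 1 ≤ mIdx ρ → M j j = c j :=
  stmt2_general b c ρ heq M hM

end Fumasoli
end

section
/- Let b, c ∈ ℕ^n_d and ρ ∈ ℤ^n with b + ρ, c + ρ ∈ ℕ^n_d and b_i = c_i for all 1 ≤ i < m(ρ). Let M ∈ ℤ^{n×n}. Define M + ρ to be the matrix obtained from M by adding ρ_i to the diagonal entry M_{ii} for each i. Then M is an upper triangular nonnegative integer matrix with column sums c and row sums b if and only if M + ρ is an upper triangular nonnegative integer matrix with column sums c + ρ and row sums b + ρ. -/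
open MvPolynomial

namespace Fumasoli

/-! If the first `k` row sums of an upper triangular nonnegative matrix agree with its first `k`
column sums, counting the entries of the top-left `k × k` block in two ways shows that the block
to its right vanishes. Every column `i` with `ρ i ≠ 0` lies left of `m(ρ)`, so its only entry is
`M i i = c i`, and `M i i + ρ i = c i + ρ i ≥ 0`. The converse is the same statement for
`M + ρ` and `-ρ`. -/

variable {n : ℕ}

lemma le_mIdx (ρ : Fin n → ℤ) {i : Fin n} (h : ρ i ≠ 0) : (i : ℕ) + 1 ≤ mIdx ρ :=
  le_max_of_le_right (Finset.le_sup (f := fun i : Fin n => (i : ℕ) + 1) (by simp [h]))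

@[simp]
lemma mIdx_neg (ρ : Fin n → ℤ) : mIdx (-ρ) = mIdx ρ := by
  simp [mIdx]

namespace IsTransferMatrixZ

variable {M : Matrix (Fin n) (Fin n) ℤ} {b c : Fin n → ℤ}

lemma apply_eq_zero_of_lt_of_le (hM : IsTransferMatrixZ M b c) {k : ℕ}
    (hbc : ∀ j : Fin n, (j : ℕ) < k → b j = c j) {j l : Fin n} (hj : (j : ℕ) < k)
    (hl : k ≤ (l : ℕ)) : M j l = 0 := by
  obtain ⟨htri, hpos, hcol, hrow⟩ := hM
  set P := Finset.univ.filter fun j : Fin n => (j : ℕ) < k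
  have hmemP (j : Fin n) : j ∈ P ↔ (j : ℕ) < k := by simp [P]
  have hrows : ∑ j ∈ P, b j = ∑ j ∈ P, ∑ l ∈ P, M j l + ∑ j ∈ P, ∑ l ∈ Pᶜ, M j l := by
    rw [← Finset.sum_add_distrib]
    exact Finset.sum_congr rfl fun j _ => by rw [← hrow j, Finset.sum_add_sum_compl]
  -- by triangularity, the columns `< k` are supported in the rows `< k`
  have hcols : ∑ l ∈ P, c l = ∑ l ∈ P, ∑ j ∈ P, M j l := by
    refine Finset.sum_congr rfl fun l hl => ?_
    rw [← hcol l, ← Finset.sum_add_sum_compl P, add_eq_left]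
    refine Finset.sum_eq_zero fun j hj => htri j l ?_
    rw [Finset.mem_compl, hmemP] at hj
    rw [hmemP] at hl
    omega
  have hcorner : ∑ j ∈ P, ∑ l ∈ Pᶜ, M j l = 0 := by
    have : ∑ j ∈ P, b j = ∑ j ∈ P, c j :=
      Finset.sum_congr rfl fun j hj => hbc j ((hmemP j).1 hj)
    have hswap : ∑ l ∈ P, ∑ j ∈ P, M j l = ∑ j ∈ P, ∑ l ∈ P, M j l := Finset.sum_comm
    linarith
  have hrow_j := (Finset.sum_eq_zero_iff_of_nonneg fun j _ => Finset.sum_nonneg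
    fun l _ => hpos j l).1 hcorner j ((hmemP j).2 hj)
  refine (Finset.sum_eq_zero_iff_of_nonneg fun l _ => hpos j l).1 hrow_j l ?_
  rw [Finset.mem_compl, hmemP]
  omega

lemma apply_self_eq_of_forall_lt_eq (hM : IsTransferMatrixZ M b c) {i : Fin n}
    (hbc : ∀ j : Fin n, (j : ℕ) < i → b j = c j) : M i i = c i := by
  rw [← hM.2.2.1 i, Finset.sum_eq_single i]
  · intro l _ hli
    rcases lt_or_gt_of_ne (Fin.val_ne_of_ne hli) with h | h
    · exact hM.apply_eq_zero_of_lt_of_le hbc h le_rfl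
    · exact hM.1 l i h
  · simp

lemma add_diagonal (hM : IsTransferMatrixZ M b c) {ρ : Fin n → ℤ} (hcρ : ∀ i, 0 ≤ c i + ρ i)
    (hbc : ∀ i : Fin n, (i : ℕ) + 1 < mIdx ρ → b i = c i) :
    IsTransferMatrixZ (M + Matrix.diagonal ρ) (b + ρ) (c + ρ) := by
  have ⟨htri, hpos, hcol, hrow⟩ := hM
  refine ⟨fun i j hji => ?_, fun i j => ?_, fun j => ?_, fun i => ?_⟩
  · simp [Matrix.diagonal_apply_ne _ (Fin.ne_of_gt hji), htri i j hji]
  · obtain rfl | hij := eq_or_ne i j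
    · by_cases hρ : ρ i = 0
      · simpa [hρ] using hpos i i
      have hi := le_mIdx ρ hρ
      have hMii := hM.apply_self_eq_of_forall_lt_eq (i := i) fun j hj => hbc j (by omega)
      simpa [hMii] using hcρ i
    · simpa [Matrix.diagonal_apply_ne _ hij] using hpos i j
  · simp [Finset.sum_add_distrib, hcol j, Matrix.diagonal_apply]
  · simp [Finset.sum_add_distrib, hrow i, Matrix.diagonal_apply]

end IsTransferMatrixZ

theorem stmt3_general {n : ℕ} (b c : Fin n → ℕ) (ρ : Fin n → ℤ)
    (hcρ : ∀ i, 0 ≤ (c i : ℤ) + ρ i)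
    (heq : ∀ i : Fin n, (i : ℕ) + 1 < mIdx ρ → b i = c i)
    (M : Matrix (Fin n) (Fin n) ℤ) :
    IsTransferMatrixZ M (fun i => (b i : ℤ)) (fun i => (c i : ℤ)) ↔
      IsTransferMatrixZ (M + Matrix.diagonal ρ)
        (fun i => (b i : ℤ) + ρ i) (fun i => (c i : ℤ) + ρ i) := by
  have hbc (i : Fin n) (hi : (i : ℕ) + 1 < mIdx ρ) : (b i : ℤ) + ρ i = c i + ρ i := by
    rw [heq i hi]
  refine ⟨fun hM => hM.add_diagonal hcρ fun i hi => congrArg _ (heq i hi), fun hM => ?_⟩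
  have hM' := hM.add_diagonal (ρ := -ρ) (by simp) (by simpa using hbc)
  rw [show Matrix.diagonal (-ρ) = -Matrix.diagonal ρ from (Matrix.diagonal_neg ρ).symm,
    add_neg_cancel_right] at hM'
  simpa [Pi.add_def] using hM'

/-- `M ∈ U(b,c)` iff `M + ρ ∈ U(b+ρ, c+ρ)`, where `M + ρ` adds `ρ` along
the diagonal. -/
theorem stmt3 {n d : ℕ} (b c : Fin n → ℕ) (ρ : Fin n → ℤ)
    (hb : ∑ i, b i = d) (hc : ∑ i, c i = d)
    (hbρ : ∀ i, 0 ≤ (b i : ℤ) + ρ i) (hbρd : (∑ i, ((b i : ℤ) + ρ i)) = (d : ℤ))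
    (hcρ : ∀ i, 0 ≤ (c i : ℤ) + ρ i) (hcρd : (∑ i, ((c i : ℤ) + ρ i)) = (d : ℤ))
    (heq : ∀ i : Fin n, (i : ℕ) + 1 < mIdx ρ → b i = c i)
    (M : Matrix (Fin n) (Fin n) ℤ) :
    IsTransferMatrixZ M (fun i => (b i : ℤ)) (fun i => (c i : ℤ)) ↔
      IsTransferMatrixZ (M + Matrix.diagonal ρ)
        (fun i => (b i : ℤ) + ρ i) (fun i => (c i : ℤ) + ρ i) :=
  stmt3_general b c ρ hcρ heq M

end Fumasoli
end

section
/- Let K be a field, S = K[X_1,…,X_n], and let φ : S → S be the K-algebra homomorphism with φ(X_j) = Σ_{i=1}^j Y_{ij} X_i where the Y_{ij} are taken as indeterminate coefficients (i.e., work over T = K[Y_{ij} : 1 ≤ i ≤ j ≤ n] and φ : T[X] → T[X]). For b ∈ ℕ^n_d, write φ(X^b) = Σ_{a ∈ ℕ^n_d} α^b_a X^a. Then α^b_a = Σ_{M ∈ U(a,b)} μ_M Y^M, where U(a,b) is the set of upper triangular nonnegative integer n×n matrices with column sums b and row sums a, Y^M = Π_{i≤j} Y_{ij}^{M_{ij}},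 and μ_M = Π_{j=1}^n multinomial(Σ_i M_{ij}; M_{1j},…,M_{nj}). In particular α^b_a ≠ 0 if and only if a ≥_Bor b. -/
open MvPolynomial

namespace Fumasoli

/-!
Expanding `φ(X^b) = ∏_j (∑_{i ≤ j} Y_{ij} X_i)^{b_j}` factor by factor with the multinomial
theorem, a term is indexed by a matrix `M` whose `j`-th column is the exponent vector chosen in
the `j`-th factor; it contributes `μ_M Y^M X^r`, where `r` is the vector of row sums of `M`, and
only upper triangular `M` occur. Distinct `M` give distinct monomials `Y^M`, and `μ_M ≠ 0` in
characteristic zero, so `α^b_a ≠ 0` iff `U(a,b)` is nonempty.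

With prefix sums `A_k = a_1 + ⋯ + a_k` and `B_k`, `a ≥_Bor b` says `B_k ≤ A_k` for all `k`.
An upper triangular `M ∈ U(a,b)` gives `B_k = ∑_{i ≤ j ≤ k} M_{ij} ≤ A_k`. Conversely, if
`B ≤ A`, cut `[0, d)` into consecutive blocks of lengths `a_i` and, independently, of lengths
`b_j`. The matrix of overlap lengths of the `i`-th `a`-block and the `j`-th `b`-block has row
sums `a` and column sums `b`, and it is upper triangular: for `j < i` the `j`-th `b`-block ends
at `B_j ≤ B_{i-1} ≤ A_{i-1}`, where the `i`-th `a`-block starts.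
-/

open Finset

theorem sum_monomial_ne_zero_iff {σ κ R : Type*} [CommSemiring R] {s : Finset κ}
    {e : κ → σ →₀ ℕ} (he : Set.InjOn e s) {c : κ → R} (hc : ∀ k ∈ s, c k ≠ 0) :
    ∑ k ∈ s, monomial (e k) (c k) ≠ 0 ↔ s.Nonempty := by
  classical
  refine ⟨nonempty_of_sum_ne_zero, fun ⟨k₀, hk₀⟩ h => hc k₀ hk₀ ?_⟩
  have := congrArg (coeff (e k₀)) h
  rwa [coeff_sum, sum_eq_single_of_mem k₀ hk₀ fun k hk hne => by
      rw [coeff_monomial, if_neg fun h => hne (he hk hk₀ h)],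
    coeff_monomial, if_pos rfl, coeff_zero] at this

section LinearSubstitution

variable {σ R : Type*} [Fintype σ] [CommSemiring R]

theorem prod_X_pow_eq_monomial_equivFunOnFinite (c : σ → ℕ) :
    ∏ i, (X i : MvPolynomial σ R) ^ c i = monomial (Finsupp.equivFunOnFinite.symm c) 1 := by
  classical
  rw [prod_X_pow]
  congr
  ext
  simp

theorem natCast_mul_prod_prod_X_pow {τ : Type*} [Fintype τ] (m : ℕ) (M : Matrix σ τ ℕ) :
    (m : MvPolynomial (σ × τ) R) * ∏ i, ∏ j, X (i, j) ^ M i j =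
      monomial (Finsupp.equivFunOnFinite.symm fun p => M p.1 p.2) (m : R) := by
  rw [← Fintype.prod_prod_type' fun i j => (X (i, j) : MvPolynomial (σ × τ) R) ^ M i j,
    prod_X_pow_eq_monomial_equivFunOnFinite, ← map_natCast C, C_mul_monomial, mul_one]

variable [DecidableEq σ]

-- Enumerated column by column, as the multinomial expansion of `∏_j (⋯)^{b_j}` produces them.
noncomputable def transportFinset (a b : σ → ℕ) : Finset (Matrix σ σ ℕ) :=
  {M ∈ (Fintype.piFinset fun j => univ.piAntidiag (b j)).map
    ((Equiv.piComm _).trans Matrix.of).toEmbedding | ∀ i, ∑ j, M i j = a i}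

theorem mem_transportFinset {a b : σ → ℕ} {M : Matrix σ σ ℕ} :
    M ∈ transportFinset a b ↔ (∀ j, ∑ i, M i j = b j) ∧ ∀ i, ∑ j, M i j = a i := by
  rw [transportFinset, mem_filter, mem_map_equiv]
  simp only [Equiv.piComm, Equiv.symm_trans, Equiv.symm_mk, Equiv.trans_apply, Equiv.coe_fn_mk,
    Fintype.mem_piFinset, mem_piAntidiag, mem_univ, implies_true, and_true]
  rfl

theorem pow_sum_C_mul_X (g : σ → R) (k : ℕ) :
    (∑ i, C (g i) * X i : MvPolynomial σ R) ^ k =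
      ∑ c ∈ univ.piAntidiag k,
        monomial (Finsupp.equivFunOnFinite.symm c) (Nat.multinomial univ c * ∏ i, g i ^ c i) := by
  rw [sum_pow_eq_sum_piAntidiag]
  refine sum_congr rfl fun c _ => ?_
  simp_rw [mul_pow, prod_mul_distrib, ← map_pow, ← map_prod,
    prod_X_pow_eq_monomial_equivFunOnFinite, C_mul_monomial, mul_one]
  rw [← C_eq_coe_nat, C_mul_monomial]

theorem coeff_aeval_sum_C_mul_X_monomial (g : σ → σ → R) (a b : σ → ℕ) :
    coeff (Finsupp.equivFunOnFinite.symm a)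
      (aeval (fun j => ∑ i, C (g i j) * X i) (monomial (Finsupp.equivFunOnFinite.symm b) (1 : R)))
      = ∑ M ∈ transportFinset a b,
          ((∏ j, Nat.multinomial univ fun i => M i j : ℕ) : R) *
            ∏ i, ∏ j, g i j ^ M i j := by
  rw [aeval_monomial, map_one, one_mul, Finsupp.prod_fintype _ _ fun _ => pow_zero _]
  simp_rw [pow_sum_C_mul_X, prod_univ_sum, ← monomial_sum_prod, coeff_sum, coeff_monomial]
  rw [transportFinset, sum_filter, sum_map]
  refine sum_congr rfl fun N _ => if_congr ?_ ?_ rfl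
  · rw [Finsupp.ext_iff]
    simp [Equiv.piComm]
  · simp only [Equiv.coe_toEmbedding, Equiv.trans_apply, Equiv.piComm_apply, Matrix.of_apply,
      Function.swap, prod_mul_distrib, Nat.cast_prod]
    rw [prod_comm]

end LinearSubstitution

section UpperTriangular

variable {σ R : Type*} [Fintype σ] [LinearOrder σ]

theorem prod_prod_ite_le_pow [CommMonoidWithZero R] (x : σ → σ → R) (M : Matrix σ σ ℕ) :
    ∏ i, ∏ j, (if i ≤ j then x i j else 0) ^ M i j =
      if M.BlockTriangular id then ∏ i, ∏ j, x i j ^ M i j else 0 := by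
  split_ifs with hM
  · refine prod_congr rfl fun i _ => prod_congr rfl fun j _ => ?_
    rcases le_or_gt i j with hij | hji
    · rw [if_pos hij]
    · rw [hM hji, pow_zero, pow_zero]
  · simp only [Matrix.BlockTriangular, id, not_forall] at hM
    obtain ⟨i, j, hji, hM⟩ := hM
    exact prod_eq_zero (mem_univ i) <| prod_eq_zero (mem_univ j) <| by
      rw [if_neg hji.not_ge, zero_pow hM]

theorem coeff_aeval_sum_le_C_X_mul_X_monomial [CommSemiring R] (a b : σ → ℕ) :
    coeff (Finsupp.equivFunOnFinite.symm a)
      (aeval (fun j => ∑ i with i ≤ j, C (X (i, j) : MvPolynomial (σ × σ) R) * X i)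
        (monomial (Finsupp.equivFunOnFinite.symm b) (1 : MvPolynomial (σ × σ) R))) =
      ∑ M ∈ transportFinset a b with M.BlockTriangular id,
        ((∏ j, Nat.multinomial univ fun i => M i j : ℕ) : MvPolynomial (σ × σ) R) *
          ∏ i, ∏ j, X (i, j) ^ M i j := by
  have hφ : (fun j => ∑ i with i ≤ j, C (X (i, j) : MvPolynomial (σ × σ) R) * X i) =
      fun j => ∑ i, C (if i ≤ j then X (i, j) else 0) * X i := by
    funext j
    rw [sum_filter]
    refine sum_congr rfl fun i _ => ?_
    split_ifs <;> simp
  simp_rw [hφ, coeff_aeval_sum_C_mul_X_monomial, prod_prod_ite_le_pow, mul_ite, mul_zero,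
    ← sum_filter]

end UpperTriangular

theorem sum_card_inter_Ico {B : ℕ → ℕ} (hB : Monotone B) (I : Finset ℕ) (m : ℕ) :
    ∑ j ∈ range m, #(I ∩ Ico (B j) (B (j + 1))) = #(I ∩ Ico (B 0) (B m)) := by
  induction m with
  | zero => simp
  | succ m ih =>
    rw [sum_range_succ, ih, ← card_union_of_disjoint, ← inter_union_distrib_left,
      Ico_union_Ico_eq_Ico (hB (Nat.zero_le m)) (hB m.le_succ)]
    exact (Ico_disjoint_Ico_consecutive _ _ _).mono inter_subset_right inter_subset_right

section PrefixSum

variable {n : ℕ}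

def prefixSum (a : Fin n → ℕ) (k : ℕ) : ℕ := ∑ i with i.val < k, a i

theorem prefixSum_zero (a : Fin n → ℕ) : prefixSum a 0 = 0 := by simp [prefixSum]

theorem prefixSum_of_le (a : Fin n → ℕ) {k : ℕ} (hk : n ≤ k) :
    prefixSum a k = ∑ i, a i := by
  simp [prefixSum, fun i : Fin n => i.isLt.trans_le hk]

theorem prefixSum_succ (a : Fin n → ℕ) (i : Fin n) :
    prefixSum a (i + 1) = prefixSum a i + a i := by
  have : univ.filter (fun j : Fin n => j.val < i.val + 1) =
      insert i (univ.filter (·.val < i.val)) := by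
    ext j
    simp only [mem_filter, mem_univ, true_and, mem_insert, Nat.lt_succ_iff_lt_or_eq,
      ← Fin.val_inj]
    tauto
  rw [prefixSum, prefixSum, this, sum_insert (by simp), add_comm]

theorem prefixSum_mono (a : Fin n → ℕ) : Monotone (prefixSum a) := fun _ _ hkl =>
  sum_le_sum_of_subset fun i hi => by
    simp only [mem_filter, mem_univ, true_and] at hi ⊢
    omega

theorem borelGE_iff_prefixSum_le {a b : Fin n → ℕ} (h : ∑ i, a i = ∑ i, b i) :
    BorelGE a b ↔ ∀ k, prefixSum b k ≤ prefixSum a k := by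
  constructor
  · rintro ⟨α, hα0, hαtop, hαdiff⟩
    have hα : ∀ k, (α k : ℤ) = prefixSum a k - prefixSum b k := by
      intro k
      induction k with
      | zero => simp [hα0, prefixSum_zero]
      | succ k ih =>
        by_cases hk : k < n
        · have := hαdiff ⟨k, hk⟩
          have := prefixSum_succ a ⟨k, hk⟩
          have := prefixSum_succ b ⟨k, hk⟩
          simp only at *
          omega
        · simp [hαtop (k + 1) (by omega), prefixSum_of_le _ (by omega : n ≤ k + 1), h]
    exact fun k => by have := hα k; omega
  · intro hle
    refine ⟨fun k => prefixSum a k - prefixSum b k, by simp [prefixSum_zero],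
      fun j hj => by simp [prefixSum_of_le _ hj, h], fun i => ?_⟩
    have := hle i
    have := hle (i + 1)
    have := prefixSum_succ a i
    have := prefixSum_succ b i
    dsimp only
    omega

theorem prefixSum_le_of_isTransferMatrix {M : Matrix (Fin n) (Fin n) ℕ} {a b : Fin n → ℕ}
    (hM : IsTransferMatrix M a b) (k : ℕ) : prefixSum b k ≤ prefixSum a k := by
  obtain ⟨hupper, hcol, hrow⟩ := hM
  calc prefixSum b k = ∑ j with j.val < k, ∑ i with i.val < k, M i j := by
        refine sum_congr rfl fun j hj => ?_
        rw [← hcol j]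
        refine (sum_subset (subset_univ _) fun i _ hi => hupper i j ?_).symm
        simp only [mem_filter, mem_univ, true_and, not_lt] at hi hj
        omega
    _ = ∑ i with i.val < k, ∑ j with j.val < k, M i j := sum_comm
    _ ≤ ∑ i with i.val < k, ∑ j, M i j :=
        sum_le_sum fun i _ => sum_le_sum_of_subset (subset_univ _)
    _ = prefixSum a k := sum_congr rfl fun i _ => hrow i

def overlapMatrix (a b : Fin n → ℕ) : Matrix (Fin n) (Fin n) ℕ := fun i j =>
  #(Ico (prefixSum a i) (prefixSum a (i + 1)) ∩ Ico (prefixSum b j) (prefixSum b (j + 1)))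

theorem sum_card_Ico_inter_Ico_prefixSum {a b : Fin n → ℕ} (h : ∑ i, a i = ∑ i, b i)
    (i : Fin n) :
    ∑ j : Fin n, #(Ico (prefixSum a i) (prefixSum a (i + 1)) ∩
      Ico (prefixSum b j) (prefixSum b (j + 1))) = a i := by
  rw [Fin.sum_univ_eq_sum_range (fun j => #(Ico (prefixSum a i) (prefixSum a (i + 1)) ∩
      Ico (prefixSum b j) (prefixSum b (j + 1)))), sum_card_inter_Ico (prefixSum_mono b),
    inter_eq_left.mpr, Nat.card_Ico, prefixSum_succ, Nat.add_sub_cancel_left]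
  rw [prefixSum_zero, prefixSum_of_le b le_rfl, ← h, ← prefixSum_of_le a le_rfl]
  exact Ico_subset_Ico (Nat.zero_le _) (prefixSum_mono a i.isLt)

theorem isTransferMatrix_overlapMatrix {a b : Fin n → ℕ} (h : ∑ i, a i = ∑ i, b i)
    (hle : ∀ k, prefixSum b k ≤ prefixSum a k) : IsTransferMatrix (overlapMatrix a b) a b := by
  refine ⟨fun i j hji => ?_, fun j => ?_, sum_card_Ico_inter_Ico_prefixSum h⟩
  · have : prefixSum b (j + 1) ≤ prefixSum b i := prefixSum_mono b hji
    have := hle i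
    rw [overlapMatrix, card_eq_zero, eq_empty_iff_forall_notMem]
    simp only [mem_inter, mem_Ico]
    omega
  · simp_rw [overlapMatrix, inter_comm]
    exact sum_card_Ico_inter_Ico_prefixSum h.symm j

theorem exists_isTransferMatrix_iff_borelGE {a b : Fin n → ℕ} (h : ∑ i, a i = ∑ i, b i) :
    (∃ M, IsTransferMatrix M a b) ↔ BorelGE a b := by
  rw [borelGE_iff_prefixSum_le h]
  exact ⟨fun ⟨_, hM⟩ => prefixSum_le_of_isTransferMatrix hM,
    fun hle => ⟨overlapMatrix a b, isTransferMatrix_overlapMatrix h hle⟩⟩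

theorem setOf_isTransferMatrix (a b : Fin n → ℕ) :
    {M | IsTransferMatrix M a b} = ↑({M ∈ transportFinset a b | M.BlockTriangular id}) := by
  ext M
  rw [Set.mem_ofPred_eq, mem_coe, mem_filter, mem_transportFinset, IsTransferMatrix]
  exact ⟨fun ⟨hU, hcol, hrow⟩ => ⟨⟨hcol, hrow⟩, fun i j => hU i j⟩,
    fun ⟨⟨hcol, hrow⟩, hU⟩ => ⟨fun _ _ => @hU _ _, hcol, hrow⟩⟩

end PrefixSum

/-- over `T = K[Y_{ij} : 1 ≤ i ≤ j ≤ n]`, let `φ : T[X] → T[X]` be the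
generic upper triangular coordinate change `X_j ↦ Σ_{i ≤ j} Y_{ij} X_i`.  Then the
coefficient `α^b_a` of `X^a` in `φ(X^b)` equals `Σ_{M ∈ U(a,b)} μ_M Y^M`, and in
particular `α^b_a ≠ 0` iff `a ≥_Bor b`. -/
theorem stmt4 {K : Type*} [Field K] [CharZero K] {n d : ℕ}
    (a b : Fin n → ℕ) (ha : ∑ i, a i = d) (hb : ∑ i, b i = d) :
    MvPolynomial.coeff (expF a)
      ((aeval fun j : Fin n =>
          ∑ i ∈ Finset.univ.filter (fun i : Fin n => i ≤ j),
            (C (X (i, j) : MvPolynomial (Fin n × Fin n) K) *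
              X i : MvPolynomial (Fin n) (MvPolynomial (Fin n × Fin n) K)))
        (mono (MvPolynomial (Fin n × Fin n) K) b)) =
      (∑ᶠ M ∈ {M : Matrix (Fin n) (Fin n) ℕ | IsTransferMatrix M a b},
        (muM M : MvPolynomial (Fin n × Fin n) K) *
          ∏ i, ∏ j, (X (i, j) : MvPolynomial (Fin n × Fin n) K) ^ M i j) ∧
    (MvPolynomial.coeff (expF a)
      ((aeval fun j : Fin n =>
          ∑ i ∈ Finset.univ.filter (fun i : Fin n => i ≤ j),
            (C (X (i, j) : MvPolynomial (Fin n × Fin n) K) *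
              X i : MvPolynomial (Fin n) (MvPolynomial (Fin n × Fin n) K)))
        (mono (MvPolynomial (Fin n × Fin n) K) b)) ≠ 0 ↔ BorelGE a b) := by
  unfold mono expF
  rw [coeff_aeval_sum_le_C_X_mul_X_monomial, setOf_isTransferMatrix, finsum_mem_coe_finset]
  refine ⟨rfl, ?_⟩
  simp_rw [natCast_mul_prod_prod_X_pow]
  rw [sum_monomial_ne_zero_iff, ← coe_nonempty, ← setOf_isTransferMatrix,
    ← exists_isTransferMatrix_iff_borelGE (ha.trans hb.symm)]
  · rfl
  · exact fun M _ N _ h => Matrix.ext fun i j =>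
      congrFun (Finsupp.equivFunOnFinite.symm.injective h) (i, j)
  · exact fun M _ => Nat.cast_ne_zero.mpr <|
      prod_ne_zero_iff.mpr fun _ _ => (Nat.multinomial_pos _ _).ne'

end Fumasoli
end

section
/- Let b, c ∈ ℕ^n_d and ρ ∈ ℤ^n with b + ρ, c + ρ ∈ ℕ^n_d and b_i = c_i for all 1 ≤ i < m(ρ). Suppose b ≥_Bor c. Then for every M ∈ U(b,c) one has μ_M = μ_{M+ρ}, where M + ρ adds ρ_j to the j-th diagonal entry of M. -/
/-! Going down the rows of the upper triangular `M`: if rows `< i` are diagonal, column `i` is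
concentrated at `(i, i)`, so `M i i = c i = b i` and the rest of row `i` vanishes. Hence `M` is
diagonal in the rows before `m(ρ)`, and each column `j ≤ m(ρ)`, in particular each column with
`ρ_j ≠ 0`, has its only nonzero entry on the diagonal: there both multinomials are `1`, and in
the other columns `M` and `M + ρ` agree. -/

open MvPolynomial

namespace Fumasoli

lemma multinomial_eq_one_of_forall_ne {α : Type*} {s : Finset α} {f : α → ℕ} (a : α)
    (hf : ∀ b, b ≠ a → f b = 0) : Nat.multinomial s f = 1 := by
  classical
  have hsingle : f = Pi.single a (f a) := funext fun b => by
    by_cases hb : b = a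
    · subst hb; simp
    · simp [hb, hf b hb]
  rw [hsingle, Nat.multinomial_single]

lemma le_mIdx_of_ne_zero {ν : ℕ} {ρ : Fin ν → ℤ} {j : Fin ν} (hj : ρ j ≠ 0) :
    (j : ℕ) + 1 ≤ mIdx ρ :=
  le_max_of_le_right <| Finset.le_sup (f := fun i : Fin ν => (i : ℕ) + 1)
    (Finset.mem_filter.mpr ⟨Finset.mem_univ j, hj⟩)

lemma addDiag_apply_of_ne {ν : ℕ} (M : Matrix (Fin ν) (Fin ν) ℕ) (ρ : Fin ν → ℤ)
    {i j : Fin ν} (h : i ≠ j) : addDiag M ρ i j = M i j :=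
  if_neg h

lemma addDiag_apply_of_eq_zero {ν : ℕ} (M : Matrix (Fin ν) (Fin ν) ℕ) {ρ : Fin ν → ℤ}
    (i : Fin ν) {j : Fin ν} (h : ρ j = 0) : addDiag M ρ i j = M i j := by
  by_cases hij : i = j
  · subst hij; simp [addDiag, h]
  · exact addDiag_apply_of_ne M ρ hij

namespace IsTransferMatrix

variable {ν : ℕ} {M : Matrix (Fin ν) (Fin ν) ℕ} {a b : Fin ν → ℕ} {k : ℕ}

theorem apply_eq_zero_of_row_lt (hM : IsTransferMatrix M a b)
    (hab : ∀ i : Fin ν, (i : ℕ) + 1 < k → a i = b i) (i : Fin ν) (hi : (i : ℕ) + 1 < k)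
    {j : Fin ν} (hj : j ≠ i) : M i j = 0 := by
  obtain ⟨htri, hcol, hrow⟩ := hM
  induction i using WellFoundedLT.induction generalizing j with
  | _ i ih =>
    have hdiag : M i i = b i := by
      rw [← hcol i, Finset.sum_eq_single_of_mem i (Finset.mem_univ i)]
      intro l _ hl
      rcases lt_or_gt_of_ne hl with hli | hli
      · exact ih l hli (by rw [Fin.lt_def] at hli; omega) (Ne.symm hl)
      · exact htri l i hli
    have hoff : M i i + ∑ l ∈ Finset.univ.erase i, M i l = ∑ l, M i l :=
      Finset.add_sum_erase _ _ (Finset.mem_univ i)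
    have hzero : ∑ l ∈ Finset.univ.erase i, M i l = 0 := by
      rw [hrow i, hab i hi] at hoff; omega
    exact Finset.sum_eq_zero_iff.mp hzero j (Finset.mem_erase.mpr ⟨hj, Finset.mem_univ j⟩)

theorem apply_eq_zero_of_col_le (hM : IsTransferMatrix M a b)
    (hab : ∀ i : Fin ν, (i : ℕ) + 1 < k → a i = b i) {j : Fin ν} (hj : (j : ℕ) + 1 ≤ k)
    (i : Fin ν) (hij : i ≠ j) : M i j = 0 := by
  rcases lt_or_gt_of_ne hij with h | h
  · exact hM.apply_eq_zero_of_row_lt hab i (by rw [Fin.lt_def] at h; omega) hij.symm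
  · exact hM.1 i j h

end IsTransferMatrix

theorem stmt5_general {n : ℕ} (b c : Fin n → ℕ) (ρ : Fin n → ℤ)
    (heq : ∀ i : Fin n, (i : ℕ) + 1 < mIdx ρ → b i = c i)
    (M : Matrix (Fin n) (Fin n) ℕ) (hM : IsTransferMatrix M b c) :
    muM M = muM (addDiag M ρ) := by
  unfold muM
  refine Finset.prod_congr rfl fun j _ => ?_
  by_cases hρ : ρ j = 0
  · simp only [addDiag_apply_of_eq_zero M _ hρ]
  · have hcol := hM.apply_eq_zero_of_col_le heq (le_mIdx_of_ne_zero hρ)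
    rw [multinomial_eq_one_of_forall_ne j hcol, multinomial_eq_one_of_forall_ne j fun i hi => by
      rw [addDiag_apply_of_ne M ρ hi, hcol i hi]]

/-- if `b ≥_Bor c`, `b_i = c_i` for `i < m(ρ)` and `M ∈ U(b,c)`, then
`μ_M = μ_{M+ρ}`. -/
theorem stmt5 {n d : ℕ} (b c : Fin n → ℕ) (ρ : Fin n → ℤ)
    (hb : ∑ i, b i = d) (hc : ∑ i, c i = d)
    (hbρ : ∀ i, 0 ≤ (b i : ℤ) + ρ i) (hbρd : (∑ i, ((b i : ℤ) + ρ i)) = (d : ℤ))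
    (hcρ : ∀ i, 0 ≤ (c i : ℤ) + ρ i) (hcρd : (∑ i, ((c i : ℤ) + ρ i)) = (d : ℤ))
    (heq : ∀ i : Fin n, (i : ℕ) + 1 < mIdx ρ → b i = c i)
    (hBor : BorelGE b c)
    (M : Matrix (Fin n) (Fin n) ℕ) (hM : IsTransferMatrix M b c) :
    muM M = muM (addDiag M ρ) :=
  stmt5_general b c ρ heq M hM

end Fumasoli
end

section
/- Let (A,C,ρ) be a binomial system with ρ_{m(ρ)} > 0 and let m(ρ) ≤ i ≤ n. Then F(A,C,ρ) ∩ K[X_1,…,X_i] = F(A_i, C_i, (ρ_1,…,ρ_i)), where A_i = {(a_1,…,a_i) : (a_1,…,a_i,0,…,0) ∈ A} and likewise for C_i. -/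
/-!
Setting `X_j = 0` for `j ≥ i` is a retraction `π` of the inclusion
`ι : K[X_1,…,X_i] → K[X_1,…,X_n]`. Since `ρ` vanishes beyond `m(ρ) ≤ i`, `π` sends each generator
of `F(A,C,ρ)` to `0` or to a generator of `F(A_i,C_i,ρ')`, and `ι` sends each generator of
`F(A_i,C_i,ρ')` to a generator of `F(A,C,ρ)`. Hence `ι⁻¹ F(A,C,ρ) ⊆ π(F(A,C,ρ)) ⊆ F(A_i,C_i,ρ') ⊆ ι⁻¹ F(A,C,ρ)`.
-/

open MvPolynomial

namespace Fumasoli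

section Restriction

variable {K : Type*}

noncomputable def projAlg (K : Type*) [CommSemiring K] {ν : ℕ} (i : ℕ) :
    MvPolynomial (Fin ν) K →ₐ[K] MvPolynomial (Fin i) K :=
  aeval fun j => if h : (j : ℕ) < i then X ⟨j, h⟩ else 0

def zeroExt {ν : ℕ} (i : ℕ) (x : Fin i → ℕ) : Fin ν → ℕ :=
  fun j => if hj : (j : ℕ) < i then x ⟨j, hj⟩ else 0

lemma mem_restrSet_iff {ν i : ℕ} {A : Set (Fin ν → ℕ)} {x : Fin i → ℕ} :
    x ∈ restrSet i A ↔ zeroExt i x ∈ A := Iff.rfl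

lemma zeroExt_comp_castLE {i ν : ℕ} (h : i ≤ ν) {a : Fin ν → ℕ}
    (ha : ∀ j : Fin ν, i ≤ j → a j = 0) : zeroExt i (a ∘ Fin.castLE h) = a := by
  funext j
  by_cases hj : (j : ℕ) < i
  · simp [zeroExt, hj]
  · simp [zeroExt, hj, ha j (not_lt.1 hj)]

lemma expF_zeroExt {i ν : ℕ} (h : i ≤ ν) (x : Fin i → ℕ) :
    expF (zeroExt i x) = Finsupp.mapDomain (Fin.castLE h) (expF x) := by
  ext j
  by_cases hj : (j : ℕ) < i
  · rw [show j = Fin.castLE h ⟨j, hj⟩ from rfl, Finsupp.mapDomain_apply (Fin.castLE_injective h)]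
    exact dif_pos hj
  · rw [Finsupp.mapDomain_of_notMem_range _ _ (by rintro ⟨k, rfl⟩; exact hj k.isLt)]
    simp [expF, zeroExt, hj]

lemma inclAlg_mono [CommSemiring K] {i ν : ℕ} (h : i ≤ ν) (x : Fin i → ℕ) :
    inclAlg K h (mono K x) = mono K (zeroExt i x) := by
  rw [inclAlg, mono, mono, rename_monomial, expF_zeroExt h]

lemma projAlg_leftInverse [CommSemiring K] {i ν : ℕ} (h : i ≤ ν) :
    Function.LeftInverse (projAlg K i) (inclAlg K h) := by
  suffices (projAlg K i).comp (inclAlg K h) = AlgHom.id K _ from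
    fun p => congrArg (· p) this
  refine algHom_ext fun k => ?_
  simp [projAlg, inclAlg, k.isLt]

lemma projAlg_mono_of_vanish [CommSemiring K] {i ν : ℕ} (h : i ≤ ν) {a : Fin ν → ℕ}
    (ha : ∀ j : Fin ν, i ≤ j → a j = 0) :
    projAlg K i (mono K a) = mono K (a ∘ Fin.castLE h) := by
  conv_lhs => rw [← zeroExt_comp_castLE h ha, ← inclAlg_mono h, projAlg_leftInverse h]

lemma projAlg_mono_of_ne_zero [CommSemiring K] {i ν : ℕ} {a : Fin ν → ℕ} {j : Fin ν}
    (hj : i ≤ j) (ha : a j ≠ 0) : projAlg K i (mono K a) = 0 := by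
  rw [projAlg, mono, aeval_monomial, map_one, one_mul]
  refine Finset.prod_eq_zero (i := j) (Finsupp.mem_support_iff.2 ha) ?_
  simp [expF, not_lt.2 hj, ha]

lemma shiftVec_of_eq_zero {ν : ℕ} {ρ : Fin ν → ℤ} (c : Fin ν → ℕ) {j : Fin ν}
    (hρ : ρ j = 0) : shiftVec ρ c j = c j := by
  simp [shiftVec, hρ]

lemma shiftVec_zeroExt {i ν : ℕ} (h : i ≤ ν) {ρ : Fin ν → ℤ}
    (hρ : ∀ j : Fin ν, i ≤ j → ρ j = 0) (x : Fin i → ℕ) :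
    shiftVec ρ (zeroExt i x) = zeroExt i (shiftVec (ρ ∘ Fin.castLE h) x) := by
  funext j
  by_cases hj : (j : ℕ) < i
  · simp [shiftVec, zeroExt, hj]
  · rw [shiftVec_of_eq_zero _ (hρ j (not_lt.1 hj))]
    simp [zeroExt, hj]

lemma eq_zero_of_mIdx_le {ν : ℕ} {ρ : Fin ν → ℤ} {i : ℕ} (hi : mIdx ρ ≤ i)
    (j : Fin ν) (hj : i ≤ j) : ρ j = 0 := by
  by_contra hρ
  have : (j : ℕ) + 1 ≤ mIdx ρ := le_max_of_le_right <|
    Finset.le_sup (f := fun k : Fin ν => (k : ℕ) + 1) (Finset.mem_filter.2 ⟨Finset.mem_univ j, hρ⟩)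
  omega

variable [CommRing K] {i ν : ℕ} (h : i ≤ ν) {A C : Set (Fin ν → ℕ)} {ρ : Fin ν → ℤ}

lemma map_inclAlg_Fideal_le (hρ : ∀ j : Fin ν, i ≤ j → ρ j = 0) :
    (Fideal K (restrSet i A) (restrSet i C) (ρ ∘ Fin.castLE h)).map (inclAlg K h) ≤
      Fideal K A C ρ := by
  rw [Fideal, Ideal.map_span, Ideal.span_le]
  rintro _ ⟨_, ⟨x, hx, rfl⟩ | ⟨x, hx, rfl⟩, rfl⟩
  · rw [inclAlg_mono h]
    exact Ideal.subset_span (Or.inl ⟨_, hx, rfl⟩)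
  · rw [map_sub, inclAlg_mono h, inclAlg_mono h, ← shiftVec_zeroExt h hρ]
    exact Ideal.subset_span (Or.inr ⟨_, hx, rfl⟩)

lemma map_projAlg_Fideal_le (hρ : ∀ j : Fin ν, i ≤ j → ρ j = 0) :
    (Fideal K A C ρ).map (projAlg K i) ≤
      Fideal K (restrSet i A) (restrSet i C) (ρ ∘ Fin.castLE h) := by
  rw [Fideal, Ideal.map_span, Ideal.span_le]
  rintro _ ⟨_, ⟨a, ha, rfl⟩ | ⟨c, hc, rfl⟩, rfl⟩
  · by_cases hvan : ∀ j : Fin ν, i ≤ j → a j = 0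
    · rw [projAlg_mono_of_vanish h hvan]
      refine Ideal.subset_span (Or.inl ⟨_, ?_, rfl⟩)
      rwa [mem_restrSet_iff, zeroExt_comp_castLE h hvan]
    · push Not at hvan
      obtain ⟨j, hj, ha0⟩ := hvan
      rw [projAlg_mono_of_ne_zero hj ha0]
      exact zero_mem _
  · by_cases hvan : ∀ j : Fin ν, i ≤ j → c j = 0
    · have hvan' : ∀ j : Fin ν, i ≤ j → shiftVec ρ c j = 0 := fun j hj => by
        rw [shiftVec_of_eq_zero c (hρ j hj), hvan j hj]
      rw [map_sub, projAlg_mono_of_vanish h hvan, projAlg_mono_of_vanish h hvan']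
      refine Ideal.subset_span (Or.inr ⟨_, ?_, rfl⟩)
      rwa [mem_restrSet_iff, zeroExt_comp_castLE h hvan]
    · push Not at hvan
      obtain ⟨j, hj, hc0⟩ := hvan
      rw [map_sub, projAlg_mono_of_ne_zero hj hc0,
        projAlg_mono_of_ne_zero hj (by rwa [shiftVec_of_eq_zero c (hρ j hj)]), sub_zero]
      exact zero_mem _

end Restriction

theorem stmt11_general {K : Type*} [Field K] {n : ℕ}
    (A C : Set (Fin n → ℕ)) (ρ : Fin n → ℤ)
    (i : ℕ) (h1 : mIdx ρ ≤ i) (h2 : i ≤ n) :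
    Ideal.comap (inclAlg K h2) (Fideal K A C ρ) =
      Fideal K (restrSet i A) (restrSet i C) (fun j : Fin i => ρ (Fin.castLE h2 j)) := by
  have hρ := eq_zero_of_mIdx_le h1
  exact le_antisymm
    ((Ideal.comap_le_map_of_inverse _ _ _ (projAlg_leftInverse h2)).trans
      (map_projAlg_Fideal_le h2 hρ))
    (Ideal.map_le_iff_le_comap.1 (map_inclAlg_Fideal_le h2 hρ))

/-- for a binomial system with `ρ_{m(ρ)} > 0` and `m(ρ) ≤ i ≤ n`,
`F(A,C,ρ) ∩ K[X_1,…,X_i] = F(A_i, C_i, (ρ_1,…,ρ_i))`. -/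
theorem stmt11 {K : Type*} [Field K] {n d : ℕ}
    (A C : Set (Fin n → ℕ)) (ρ : Fin n → ℤ)
    (hB : IsBinomialSystem d A C ρ) (hm : mPos ρ)
    (i : ℕ) (h1 : mIdx ρ ≤ i) (h2 : i ≤ n) :
    Ideal.comap (inclAlg K h2) (Fideal K A C ρ) =
      Fideal K (restrSet i A) (restrSet i C) (fun j : Fin i => ρ (Fin.castLE h2 j)) :=
  stmt11_general A C ρ i h1 h2

end Fumasoli
end
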